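/- Let Λ be a finite alphabet and let X ⊆ Λ^ℕ be a subshift. Then the following are equivalent: (i) the spectral partial action associated to X is topologically free; (ii) for every finite list of finite words β₁, β₂, …, β_n and for every circuit γ such that γ^∞ ∈ ⋂_{i=1}^n F_{β_i}, the set ⋂_{i=1}^n F_{β_i} contains some element other than γ^∞. -/

import Mathlib

open scoped Classical

namespace SubshiftPaper

variable {Λ : Type}

/-- The left shift on infinite words. -/
def shiftMap (x : ℕ → Λ) : ℕ → Λ := fun n => x (n + 1)

/-- Concatenation of a finite word with an infinite word. -/
def cat (α : List Λ) (y : ℕ → Λ) : ℕ → Λ := fun n => α.getD n (y (n - α.length))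

/-- `α` is a prefix of the infinite word `x`. -/
def Pref (α : List Λ) (x : ℕ → Λ) : Prop := ∀ (i : ℕ) (h : i < α.length), x i = α[i]

/-- The tail of `x` after `n` letters. -/
def tail (x : ℕ → Λ) (n : ℕ) : ℕ → Λ := fun i => x (n + i)

/-- `α` occurs in `x` at position `n`. -/
def OccursAt (α : List Λ) (x : ℕ → Λ) (n : ℕ) : Prop :=
  ∀ (i : ℕ) (h : i < α.length), x (n + i) = α[i]

/-- `α` occurs in `x` (as a contiguous block of letters). -/
def Occurs (α : List Λ) (x : ℕ → Λ) : Prop := ∃ n, OccursAt α x n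

/-- `X` is a subshift: a nonempty closed shift-invariant subset. -/
def IsSubshift [TopologicalSpace Λ] (X : Set (ℕ → Λ)) : Prop :=
  X.Nonempty ∧ IsClosed X ∧ ∀ x ∈ X, shiftMap x ∈ X

/-- The set of infinite words avoiding all words in `F`. -/
def ForbidSpace (F : Set (List Λ)) : Set (ℕ → Λ) := {x | ∀ α ∈ F, ¬ Occurs α x}

/-- `X` is a subshift of finite type. -/
def IsSFT (X : Set (ℕ → Λ)) : Prop := ∃ F : Set (List Λ), F.Finite ∧ X = ForbidSpace F

/-- The follower set of a finite word. -/
def follower (X : Set (ℕ → Λ)) (α : List Λ) : Set (ℕ → Λ) := {y | y ∈ X ∧ cat α y ∈ X}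

/-- The cylinder of a finite word. -/
def cylinder (X : Set (ℕ → Λ)) (α : List Λ) : Set (ℕ → Λ) := {x | x ∈ X ∧ Pref α x}

/-- The language of `X`. -/
def Language (X : Set (ℕ → Λ)) : Set (List Λ) := {α | ∃ x ∈ X, Occurs α x}

/-- The embedding of finite words into the free group. -/
def wd (α : List Λ) : FreeGroup Λ := (α.map FreeGroup.of).prod

/-- Indicator function of a set of group elements. -/
noncomputable def chi (s : Set (FreeGroup Λ)) : FreeGroup Λ → Bool :=
  fun g => if g ∈ s then true else false

/-- The set `ξ_x ⊆ 𝔽`. -/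
def xiSet [DecidableEq Λ] (X : Set (ℕ → Λ)) (x : ℕ → Λ) : Set (FreeGroup Λ) :=
  {g | ∃ α β : List Λ, g = wd α * (wd β)⁻¹ ∧
        FreeGroup.norm g = α.length + β.length ∧
        Pref α x ∧ tail x α.length ∈ follower X α ∩ follower X β}

/-- `ξ_x` as an element of `2^𝔽`. -/
noncomputable def xiB [DecidableEq Λ] (X : Set (ℕ → Λ)) (x : ℕ → Λ) : FreeGroup Λ → Bool :=
  chi (xiSet X x)

/-- The spectrum `Ω_X`: the closure of `{ξ_x : x ∈ X}` in `2^𝔽`. -/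
noncomputable def Omega [DecidableEq Λ] (X : Set (ℕ → Λ)) : Set (FreeGroup Λ → Bool) :=
  closure ((fun x => xiB X x) '' X)

/-- Left translation of an element of `2^𝔽`. -/
def translate (g : FreeGroup Λ) (ξ : FreeGroup Λ → Bool) : FreeGroup Λ → Bool :=
  fun h => ξ (g⁻¹ * h)

/-- `x` is the stem of `ξ`: `ξ ∩ 𝔽₊` is exactly the set of prefixes of `x`. -/
def IsStem (ξ : FreeGroup Λ → Bool) (x : ℕ → Λ) : Prop :=
  {g | ξ g = true} ∩ {g | ∃ α : List Λ, g = wd α} =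
    {g | ∃ α : List Λ, g = wd α ∧ Pref α x}

/-- `x` is the stem of `ξ` at `g`: `ξ ∩ g𝔽₊ = {gα : α is a prefix of x}`. -/
def IsStemAt (ξ : FreeGroup Λ → Bool) (g : FreeGroup Λ) (x : ℕ → Λ) : Prop :=
  {h | ξ h = true} ∩ {h | ∃ α : List Λ, h = g * wd α} =
    {h | ∃ α : List Λ, h = g * wd α ∧ Pref α x}

/-- The orbit of `ξ` under the spectral partial action. -/
def Orbit (ξ : FreeGroup Λ → Bool) : Set (FreeGroup Λ → Bool) :=
  {η | ∃ g : FreeGroup Λ, ξ g⁻¹ = true ∧ η = translate g ξ}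

/-- Topological freeness of the spectral partial action. -/
noncomputable def TopFree [DecidableEq Λ] (X : Set (ℕ → Λ)) : Prop :=
  ∀ g : FreeGroup Λ, g ≠ 1 →
    ∀ U : Set (FreeGroup Λ → Bool), IsOpen U →
      (U ∩ Omega X ⊆ {ξ | ξ g⁻¹ = true ∧ translate g ξ = ξ}) → U ∩ Omega X = ∅

/-- The periodic infinite word `γ^∞`. -/
noncomputable def perInf [Nonempty Λ] (γ : List Λ) : ℕ → Λ :=
  fun n => γ.getD (n % γ.length) (Classical.arbitrary Λ)

/-- `n`-fold concatenation of a finite word with itself. -/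
def rep : ℕ → List Λ → List Λ
  | 0, _ => []
  | n + 1, γ => γ ++ rep n γ

/-- `γ` is a circuit relative to `X`. -/
noncomputable def IsCircuit [Nonempty Λ] (X : Set (ℕ → Λ)) (γ : List Λ) : Prop :=
  γ ≠ [] ∧ perInf γ ∈ X

/-- `y` is an exit for the circuit `γ`. -/
noncomputable def IsExit [Nonempty Λ] (X : Set (ℕ → Λ)) (γ : List Λ) (y : ℕ → Λ) : Prop :=
  y ≠ perInf γ ∧ cat γ y ∈ X

/-- `z` is a strong exit for the circuit `γ`. -/
noncomputable def IsStrongExit [Nonempty Λ] (X : Set (ℕ → Λ)) (γ : List Λ) (z : ℕ → Λ) : Prop :=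
  z ≠ perInf γ ∧ ∀ n : ℕ, cat (rep n γ) z ∈ X

/-- The sets `X_g` of the standard partial action. -/
def Xg [DecidableEq Λ] (X : Set (ℕ → Λ)) (g : FreeGroup Λ) : Set (ℕ → Λ) :=
  {x | ∃ α β : List Λ, g = wd α * (wd β)⁻¹ ∧
        FreeGroup.norm g = α.length + β.length ∧
        ∃ y ∈ follower X α ∩ follower X β, x = cat α y}

/-- `x` is a fixed point for `θ_g`. -/
def IsThetaFixed [DecidableEq Λ] (X : Set (ℕ → Λ)) (g : FreeGroup Λ) (x : ℕ → Λ) : Prop :=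
  ∃ α β : List Λ, g = wd α * (wd β)⁻¹ ∧
    FreeGroup.norm g = α.length + β.length ∧
    ∃ y ∈ follower X α ∩ follower X β, x = cat β y ∧ cat α y = x

/-- `x` may be collectively reached from the finite set `B`. -/
def CollReached (X : Set (ℕ → Λ)) (B : Finset (List Λ)) (x : ℕ → Λ) : Prop :=
  ∃ α γ : List Λ, Pref α x ∧ ∀ β ∈ B, cat (β ++ γ) (tail x α.length) ∈ X

/-- `X` is collectively cofinal. -/
def CollCofinal (X : Set (ℕ → Λ)) : Prop :=
  ∀ B : Finset (List Λ), ↑B ⊆ Language X → (⋂ β ∈ B, follower X β).Nonempty →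
    ∀ x ∈ X, CollReached X B x

/-- `X` is strongly cofinal. -/
def StrongCofinal (X : Set (ℕ → Λ)) : Prop :=
  ∀ β ∈ Language X, ∃ M : ℕ, ∀ x ∈ X, ∃ α γ : List Λ, Pref α x ∧
    cat (β ++ γ) (tail x α.length) ∈ X ∧ α.length + γ.length ≤ M

/-- The even shift. -/
def evenShift : Set (ℕ → Fin 2) :=
  ForbidSpace {w | ∃ n : ℕ, w = 0 :: (List.replicate (2 * n + 1) 1 ++ [0])}

/-!
For `x ∈ X` the set `ξ_x` is transparent: `αβ⁻¹ ∈ ξ_x`, reduced or not, iff `α` is a prefix of `x`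
and `β` followed by the rest of `x` lies in `X`. Hence, for `g⁻¹ = αβ⁻¹` in reduced form, `ξ_x` is
fixed by `g` iff `x = αy = βy` for some `y`, i.e. iff `x` is eventually periodic with period and
starting point prescribed by `g`; in particular `ξ_{γ^∞}` is fixed by `γ`.

If `γ^∞` were the only point of `⋂ F_{β_i}`, the open set `{ξ : β_i⁻¹ ∈ ξ for all i}` would meet
`Ω_X` only in the fixed point `ξ_{γ^∞}` of `γ`. Conversely, an open set of fixed points of `g ≠ 1`
meeting `Ω_X` contains some `ξ_x` with `x` eventually periodic. For `M` large, `ξ_{x'}` with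
`x' = x|_M z` stays in that open set as soon as `z` satisfies finitely many follower conditions, and
the tail `ρ^∞` of `x` after `M` satisfies them. An exit `z ≠ ρ^∞` satisfying them makes `ξ_{x'}` a
fixed point of `g`, so `x'` is periodic from the same place with the same period as `x`; as the two
agree on a full period, `x' = x`, a contradiction.
-/

theorem cat_apply_of_lt (α : List Λ) (y : ℕ → Λ) {n : ℕ} (h : n < α.length) :
    cat α y n = α[n] :=
  List.getD_eq_getElem α _ h

theorem cat_apply_of_le (α : List Λ) (y : ℕ → Λ) {n : ℕ} (h : α.length ≤ n) :
    cat α y n = y (n - α.length) :=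
  List.getD_eq_default α _ h

@[simp] theorem cat_nil (y : ℕ → Λ) : cat [] y = y := funext fun n => by simp [cat]

theorem cat_append (α β : List Λ) (y : ℕ → Λ) : cat (α ++ β) y = cat α (cat β y) := by
  funext n
  rcases lt_or_ge n α.length with h | h
  · rw [cat_apply_of_lt _ _ (by simp; omega), cat_apply_of_lt _ _ h, List.getElem_append_left]
  · rw [cat_apply_of_le α _ h]
    rcases lt_or_ge n (α.length + β.length) with h' | h'
    · rw [cat_apply_of_lt _ _ (by simp; omega), cat_apply_of_lt _ _ (by omega),
        List.getElem_append_right (by omega)]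
    · rw [cat_apply_of_le _ _ (by simp; omega), cat_apply_of_le _ _ (by omega)]
      simp only [List.length_append]
      congr 1
      omega

@[simp] theorem tail_zero (x : ℕ → Λ) : tail x 0 = x := funext fun n => by simp [tail]

theorem tail_tail (x : ℕ → Λ) (m n : ℕ) : tail (tail x m) n = tail x (m + n) := by
  funext i
  simp only [tail, Nat.add_assoc]

@[simp] theorem tail_cat (α : List Λ) (y : ℕ → Λ) : tail (cat α y) α.length = y := by
  funext i
  simp [tail, cat_apply_of_le]

theorem pref_cat (α : List Λ) (y : ℕ → Λ) : Pref α (cat α y) := fun _ h => cat_apply_of_lt α y h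

theorem pref_nil (x : ℕ → Λ) : Pref [] x := fun _ h => absurd h (Nat.not_lt_zero _)

def prefixWord (x : ℕ → Λ) (n : ℕ) : List Λ := (List.range n).map x

@[simp] theorem length_prefixWord (x : ℕ → Λ) (n : ℕ) : (prefixWord x n).length = n := by
  simp [prefixWord]

theorem pref_prefixWord (x : ℕ → Λ) (n : ℕ) : Pref (prefixWord x n) x := fun i h => by
  simp [prefixWord]

theorem cat_tail_of_pref {α : List Λ} {x : ℕ → Λ} (h : Pref α x) :
    cat α (tail x α.length) = x := by
  funext n
  rcases lt_or_ge n α.length with h' | h'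
  · rw [cat_apply_of_lt _ _ h', h n h']
  · rw [cat_apply_of_le _ _ h', tail, Nat.add_sub_cancel' h']

theorem pref_iff_exists_cat {α : List Λ} {x : ℕ → Λ} : Pref α x ↔ ∃ y, x = cat α y :=
  ⟨fun h => ⟨_, (cat_tail_of_pref h).symm⟩, by rintro ⟨y, rfl⟩; exact pref_cat α y⟩

theorem pref_append {α δ : List Λ} {x : ℕ → Λ} :
    Pref (α ++ δ) x ↔ Pref α x ∧ Pref δ (tail x α.length) := by
  simp only [pref_iff_exists_cat, cat_append]
  constructor
  · rintro ⟨y, rfl⟩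
    exact ⟨⟨_, rfl⟩, ⟨y, tail_cat α _⟩⟩
  · rintro ⟨⟨y, rfl⟩, ⟨z, hz⟩⟩
    rw [tail_cat] at hz
    exact ⟨z, by rw [hz]⟩

theorem Pref.prefix_of_length_le {α β : List Λ} {x : ℕ → Λ} (hα : Pref α x) (hβ : Pref β x)
    (h : α.length ≤ β.length) : α <+: β := by
  rw [List.prefix_iff_eq_take]
  refine List.ext_getElem (by simp [h]) fun i hi _ => ?_
  rw [List.getElem_take, ← hα i hi, ← hβ i (by omega)]

theorem Pref.prefix_or_prefix {α β : List Λ} {x : ℕ → Λ} (hα : Pref α x) (hβ : Pref β x) :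
    α <+: β ∨ β <+: α :=
  (le_total α.length β.length).imp (hα.prefix_of_length_le hβ) (hβ.prefix_of_length_le hα)

theorem cat_drop_tail_of_pref {β : List Λ} {x : ℕ → Λ} (hβ : Pref β x) {m : ℕ}
    (hm : m ≤ β.length) : cat (β.drop m) (tail x β.length) = tail x m := by
  have hsplit := (List.take_append_drop m β).symm ▸ hβ
  have hlen : (β.take m).length = m := List.length_take_of_le hm
  have := cat_tail_of_pref (pref_append.1 hsplit).2
  rwa [hlen, tail_tail, List.length_drop, Nat.add_sub_cancel' hm] at this

theorem eq_of_forall_pref_iff {u v : ℕ → Λ} (h : ∀ w : List Λ, Pref w u ↔ Pref w v) : u = v := by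
  funext n
  have := (h (prefixWord u (n + 1))).1 (pref_prefixWord u _) n (by simp)
  simpa [prefixWord] using this.symm

theorem cat_prefixWord_tail (x : ℕ → Λ) (n : ℕ) : cat (prefixWord x n) (tail x n) = x := by
  simpa using cat_tail_of_pref (pref_prefixWord x n)

theorem mem_cylinder_cat_prefixWord (x z : ℕ → Λ) (n : ℕ) :
    cat (prefixWord x n) z ∈ PiNat.cylinder x n := fun i hi => by
  rw [cat_apply_of_lt _ _ (by simpa using hi)]
  simp [prefixWord]

section Periodic

theorem tail_tail_of_tail_eq {x : ℕ → Λ} {s p M : ℕ} (h : tail x s = tail x (s + p))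
    (hM : s ≤ M) : tail (tail x M) p = tail x M := by
  obtain ⟨k, rfl⟩ := Nat.exists_eq_add_of_le hM
  rw [tail_tail, Nat.add_right_comm, ← tail_tail x (s + p), ← h, tail_tail]

theorem eq_of_tail_eq_of_eqOn {x y : ℕ → Λ} {s p : ℕ} (hp : 0 < p)
    (hx : tail x s = tail x (s + p)) (hy : tail y s = tail y (s + p))
    (h : ∀ i < s + p, x i = y i) : x = y := by
  funext i
  induction i using Nat.strong_induction_on with
  | _ i ih =>
    rcases lt_or_ge i (s + p) with hi | hi
    · exact h i hi
    · have hback : ∀ z : ℕ → Λ, tail z s = tail z (s + p) → z i = z (i - p) := fun z hz => by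
        have := congrFun hz (i - (s + p))
        simp only [tail] at this
        rw [Nat.add_sub_cancel' hi] at this
        rw [← this]
        congr 1
        omega
      rw [hback x hx, hback y hy, ih _ (by omega)]

variable [Nonempty Λ]

theorem pref_perInf (γ : List Λ) : Pref γ (perInf γ) := fun i h => by
  simp [perInf, Nat.mod_eq_of_lt h, h]

theorem tail_perInf_length (γ : List Λ) : tail (perInf γ) γ.length = perInf γ := by
  funext i
  simp [tail, perInf]

theorem perInf_prefixWord {y : ℕ → Λ} {p : ℕ} (hp : 0 < p) (hy : tail y p = y) :
    perInf (prefixWord y p) = y := by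
  have periodic : ∀ k, tail y (p * k) = y := fun k => by
    induction k with
    | zero => simp
    | succ k ih => rw [Nat.mul_succ, ← tail_tail, ih, hy]
  funext n
  have := congrFun (periodic (n / p)) (n % p)
  simp only [tail, Nat.div_add_mod] at this
  simp [perInf, prefixWord, Nat.mod_lt n hp, this]

end Periodic

section FreeGroupWords

@[simp] theorem wd_nil : wd ([] : List Λ) = 1 := rfl

theorem wd_append (α β : List Λ) : wd (α ++ β) = wd α * wd β := by
  simp [wd]

theorem wd_eq_mk (α : List Λ) : wd α = FreeGroup.mk (α.map (·, true)) := by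
  induction α with
  | nil => rfl
  | cons a α ih =>
    rw [show wd (a :: α) = FreeGroup.of a * wd α from List.prod_cons, ih, FreeGroup.of,
      FreeGroup.mul_mk]
    rfl

def posNegWord (α β : List Λ) : List (Λ × Bool) := α.map (·, true) ++ (β.map (·, false)).reverse

theorem wd_mul_inv_eq_mk (α β : List Λ) : wd α * (wd β)⁻¹ = FreeGroup.mk (posNegWord α β) := by
  rw [wd_eq_mk, wd_eq_mk, FreeGroup.inv_mk, FreeGroup.mul_mk, posNegWord, FreeGroup.invRev,
    List.map_map]
  rfl

theorem posNegWord_injective {α β γ δ : List Λ} (h : posNegWord α β = posNegWord γ δ) :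
    α = γ ∧ β = δ := by
  have pos := congrArg (fun w => (w.filter (·.2)).map Prod.fst) h
  have neg := congrArg (fun w => ((w.filter (! ·.2)).map Prod.fst).reverse) h
  simp [posNegWord, List.filter_map, Function.comp_def, List.filter_reverse] at pos neg
  exact ⟨pos, neg⟩

variable [DecidableEq Λ]

theorem toWord_wd_mul_inv {α β : List Λ}
    (h : FreeGroup.norm (wd α * (wd β)⁻¹) = α.length + β.length) :
    (wd α * (wd β)⁻¹).toWord = posNegWord α β := by
  rw [wd_mul_inv_eq_mk, FreeGroup.norm, FreeGroup.toWord_mk] at h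
  rw [wd_mul_inv_eq_mk, FreeGroup.toWord_mk]
  exact FreeGroup.reduce.red.sublist.eq_of_length (by simpa [posNegWord] using h)

theorem eq_of_wd_mul_inv_eq {α β γ δ : List Λ} (h : wd α * (wd β)⁻¹ = wd γ * (wd δ)⁻¹)
    (h₁ : FreeGroup.norm (wd α * (wd β)⁻¹) = α.length + β.length)
    (h₂ : FreeGroup.norm (wd γ * (wd δ)⁻¹) = γ.length + δ.length) : α = γ ∧ β = δ :=
  posNegWord_injective <| by rw [← toWord_wd_mul_inv h₁, ← toWord_wd_mul_inv h₂, h]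

theorem norm_wd_mul_inv {α β : List Λ} (h : ∀ a ∈ α.getLast?, a ∉ β.getLast?) :
    FreeGroup.norm (wd α * (wd β)⁻¹) = α.length + β.length := by
  have reduced : FreeGroup.IsReduced (posNegWord α β) := by
    refine List.isChain_append.2 ⟨?_, ?_, ?_⟩
    · exact (List.isChain_map _).2 (List.pairwise_of_forall fun _ _ => by simp).isChain
    · exact List.isChain_reverse.2 <|
        (List.isChain_map _).2 (List.pairwise_of_forall fun _ _ => by simp).isChain
    · simp only [List.getLast?_map, List.head?_reverse, Option.mem_def, Option.map_eq_some_iff]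
      rintro _ ⟨a, ha, rfl⟩ _ ⟨b, hb, rfl⟩ rfl
      exact absurd hb (h a ha)
  rw [FreeGroup.norm, wd_mul_inv_eq_mk, FreeGroup.toWord_mk, reduced.reduce_eq]
  simp [posNegWord]

theorem norm_wd (α : List Λ) : FreeGroup.norm (wd α) = α.length := by
  simpa using norm_wd_mul_inv (α := α) (β := []) (by simp)

theorem exists_reduced_wd_mul_inv (α β : List Λ) : ∃ α' β' γ : List Λ,
    α = α' ++ γ ∧ β = β' ++ γ ∧ FreeGroup.norm (wd α' * (wd β')⁻¹) = α'.length + β'.length := by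
  induction β using List.reverseRecOn generalizing α with
  | nil => exact ⟨α, [], [], by simp, by simp, by simpa using norm_wd α⟩
  | append_singleton β b ih =>
    by_cases hb : α.getLast? = some b
    · obtain ⟨α, rfl⟩ := List.getLast?_eq_some_iff.1 hb
      obtain ⟨α', β', γ, rfl, rfl, h⟩ := ih α
      exact ⟨α', β', γ ++ [b], by simp, by simp, h⟩
    · refine ⟨α, β ++ [b], [], by simp, by simp, norm_wd_mul_inv ?_⟩
      intro a ha hab
      rw [List.getLast?_concat, Option.mem_some_iff] at hab
      exact hb (hab ▸ ha)

end FreeGroupWords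

theorem IsSubshift.tail_mem [TopologicalSpace Λ] {X : Set (ℕ → Λ)} (hX : IsSubshift X)
    {x : ℕ → Λ} (hx : x ∈ X) (n : ℕ) : tail x n ∈ X := by
  induction n with
  | zero => simpa
  | succ n ih =>
    have hshift : shiftMap (tail x n) = tail x (n + 1) := funext fun i => congrArg x (by omega)
    exact hshift ▸ hX.2.2 _ ih

section Spectrum

variable [DecidableEq Λ] {X : Set (ℕ → Λ)} {x : ℕ → Λ}

theorem xiB_eq_true {h : FreeGroup Λ} : xiB X x h = true ↔ h ∈ xiSet X x := by
  simp [xiB, chi]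

theorem xiB_mem_Omega (hx : x ∈ X) : xiB X x ∈ Omega X :=
  subset_closure (Set.mem_image_of_mem _ hx)

variable [TopologicalSpace Λ] (hX : IsSubshift X) (hx : x ∈ X)
include hX hx

theorem mem_xiSet_iff {h : FreeGroup Λ} : h ∈ xiSet X x ↔ ∃ α β : List Λ,
    h = wd α * (wd β)⁻¹ ∧ FreeGroup.norm h = α.length + β.length ∧
      Pref α x ∧ cat β (tail x α.length) ∈ X := by
  constructor
  · rintro ⟨α, β, rfl, hn, hα, -, -, hβ⟩
    exact ⟨α, β, rfl, hn, hα, hβ⟩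
  · rintro ⟨α, β, rfl, hn, hα, hβ⟩
    refine ⟨α, β, rfl, hn, hα, ⟨hX.tail_mem hx _, ?_⟩, hX.tail_mem hx _, hβ⟩
    rwa [cat_tail_of_pref hα]

theorem mem_xiSet_iff_exists {h : FreeGroup Λ} : h ∈ xiSet X x ↔ ∃ α β : List Λ,
    h = wd α * (wd β)⁻¹ ∧ Pref α x ∧ cat β (tail x α.length) ∈ X := by
  rw [mem_xiSet_iff hX hx]
  refine ⟨fun ⟨α, β, he, _, hα, hβ⟩ => ⟨α, β, he, hα, hβ⟩, ?_⟩
  rintro ⟨α, β, rfl, hα, hβ⟩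
  obtain ⟨α, β, γ, rfl, rfl, hn⟩ := exists_reduced_wd_mul_inv α β
  have hcancel : wd (α ++ γ) * (wd (β ++ γ))⁻¹ = wd α * (wd β)⁻¹ := by
    simp only [wd_append]; group
  refine ⟨α, β, hcancel, by rw [hcancel, hn], (pref_append.1 hα).1, ?_⟩
  rwa [← cat_drop_tail_of_pref hα (by simp), List.drop_left, ← cat_append]

theorem wd_mem_xiSet_iff {α : List Λ} : wd α ∈ xiSet X x ↔ Pref α x := by
  constructor
  · rw [mem_xiSet_iff hX hx]
    rintro ⟨γ, δ, he, hn, hγ, -⟩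
    have hα : wd α = wd α * (wd [])⁻¹ := by simp
    obtain ⟨rfl, -⟩ := eq_of_wd_mul_inv_eq (hα.symm.trans he) (by simpa using norm_wd α)
      (he ▸ hn)
    exact hγ
  · intro hα
    exact (mem_xiSet_iff_exists hX hx).2 ⟨α, [], by simp, hα, by simpa using hX.tail_mem hx _⟩

theorem inv_wd_mem_xiSet_iff {β : List Λ} : (wd β)⁻¹ ∈ xiSet X x ↔ cat β x ∈ X := by
  constructor
  · rw [mem_xiSet_iff hX hx]
    rintro ⟨γ, δ, he, hn, -, hδ⟩
    have hβ : (wd β)⁻¹ = wd [] * (wd β)⁻¹ := by simp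
    obtain ⟨rfl, rfl⟩ := eq_of_wd_mul_inv_eq (hβ.symm.trans he)
      (by simp [FreeGroup.norm_inv_eq, norm_wd]) (he ▸ hn)
    simpa using hδ
  · intro hβ
    exact (mem_xiSet_iff_exists hX hx).2 ⟨[], β, by simp, pref_nil x, by simpa using hβ⟩

theorem wd_mul_inv_mul_mem_xiSet {α β : List Λ} (hα : Pref α x) (hβ : Pref β x)
    (hαβ : tail x α.length = tail x β.length) {h : FreeGroup Λ} (hh : h ∈ xiSet X x) :
    wd α * (wd β)⁻¹ * h ∈ xiSet X x := by
  rw [mem_xiSet_iff_exists hX hx] at hh ⊢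
  obtain ⟨γ, δ, rfl, hγ, hδ⟩ := hh
  rcases hβ.prefix_or_prefix hγ with ⟨ρ, rfl⟩ | ⟨ρ, rfl⟩
  · refine ⟨α ++ ρ, δ, by simp only [wd_append]; group, ?_, ?_⟩
    · exact pref_append.2 ⟨hα, hαβ ▸ (pref_append.1 hγ).2⟩
    · rwa [List.length_append, ← tail_tail, hαβ, tail_tail, ← List.length_append]
  · refine ⟨α, δ ++ ρ, by simp only [wd_append]; group, hα, ?_⟩
    have hρ := cat_drop_tail_of_pref hβ (m := γ.length) (by simp)
    rw [List.drop_left] at hρ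
    rwa [cat_append, hαβ, hρ]

end Spectrum

def fixedSet (g : FreeGroup Λ) : Set (FreeGroup Λ → Bool) :=
  {ξ | ξ g⁻¹ = true ∧ translate g ξ = ξ}

section Fixed

variable [DecidableEq Λ] [TopologicalSpace Λ] {X : Set (ℕ → Λ)} {x : ℕ → Λ}

theorem xiB_mem_fixedSet_iff (hX : IsSubshift X) (hx : x ∈ X) {g : FreeGroup Λ} {α β : List Λ}
    (hg : g⁻¹ = wd α * (wd β)⁻¹) (hn : FreeGroup.norm g⁻¹ = α.length + β.length) :
    xiB X x ∈ fixedSet g ↔ Pref α x ∧ Pref β x ∧ tail x α.length = tail x β.length := by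
  constructor
  · rintro ⟨hmem, htrans⟩
    obtain ⟨γ, δ, he, hn', hγ, -⟩ := (mem_xiSet_iff hX hx).1 (xiB_eq_true.1 hmem)
    obtain ⟨rfl, -⟩ := eq_of_wd_mul_inv_eq (he.symm.trans hg) (he ▸ hn') (hg ▸ hn)
    have hshift : ∀ w, Pref (γ ++ w) x ↔ Pref (β ++ w) x := fun w => by
      have hw := congrFun htrans (wd (β ++ w))
      rw [translate, hg, show wd γ * (wd β)⁻¹ * wd (β ++ w) = wd (γ ++ w) by
        simp only [wd_append]; group, Bool.eq_iff_iff, xiB_eq_true, xiB_eq_true,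
        wd_mem_xiSet_iff hX hx, wd_mem_xiSet_iff hX hx] at hw
      exact hw
    have hβ : Pref β x := by simpa using (hshift []).1 (by simpa using hγ)
    refine ⟨hγ, hβ, eq_of_forall_pref_iff fun w => ?_⟩
    simpa [pref_append, hγ, hβ] using hshift w
  · rintro ⟨hα, hβ, hαβ⟩
    refine ⟨xiB_eq_true.2 ((mem_xiSet_iff hX hx).2 ⟨α, β, hg, hg ▸ hn, hα, ?_⟩), funext fun h => ?_⟩
    · rwa [hαβ, cat_tail_of_pref hβ]
    have hg' : wd β * (wd α)⁻¹ * g⁻¹ = 1 := by rw [hg]; group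
    rw [translate, Bool.eq_iff_iff, xiB_eq_true, xiB_eq_true]
    refine ⟨fun hh => ?_, fun hh => hg ▸ wd_mul_inv_mul_mem_xiSet hX hx hα hβ hαβ hh⟩
    simpa [mul_assoc, ← mul_assoc _ g⁻¹, hg'] using
      wd_mul_inv_mul_mem_xiSet hX hx hβ hα hαβ.symm hh

theorem exists_period_of_mem_fixedSet (hX : IsSubshift X) (hx : x ∈ X)
    {g : FreeGroup Λ} (hg : g ≠ 1) (hfix : xiB X x ∈ fixedSet g) :
    ∃ s p, 0 < p ∧ tail x s = tail x (s + p) ∧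
      ∀ y ∈ X, xiB X y ∈ fixedSet g → tail y s = tail y (s + p) := by
  obtain ⟨α, β, he, hn, -⟩ := (mem_xiSet_iff hX hx).1 (xiB_eq_true.1 hfix.1)
  have hfixed := fun y (hy : y ∈ X) => xiB_mem_fixedSet_iff hX hy he hn
  obtain ⟨hα, hβ, hαβ⟩ := (hfixed x hx).1 hfix
  have hlen : α.length ≠ β.length := fun hl => hg <| inv_eq_one.1 <| by
    rw [he, (hα.prefix_of_length_le hβ hl.le).eq_of_length hl, mul_inv_cancel]
  rcases lt_or_gt_of_ne hlen with hl | hl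
  · refine ⟨α.length, β.length - α.length, by omega, ?_⟩
    rw [Nat.add_sub_cancel' hl.le]
    exact ⟨hαβ, fun y hy hfy => ((hfixed y hy).1 hfy).2.2⟩
  · refine ⟨β.length, α.length - β.length, by omega, ?_⟩
    rw [Nat.add_sub_cancel' hl.le]
    exact ⟨hαβ.symm, fun y hy hfy => ((hfixed y hy).1 hfy).2.2.symm⟩

end Fixed

theorem _root_.IsOpen.exists_finset_subset {ι : Type*} {β : ι → Type*} [∀ i, TopologicalSpace (β i)]
    {U : Set (∀ i, β i)} (hU : IsOpen U) {ξ : ∀ i, β i} (hξ : ξ ∈ U) :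
    ∃ I : Finset ι, {η | ∀ i ∈ I, η i = ξ i} ⊆ U := by
  obtain ⟨I, u, hu, hsub⟩ := isOpen_pi_iff.1 hU ξ hξ
  exact ⟨I, fun η hη => hsub fun i hi => (hη i hi).symm ▸ (hu i hi).2⟩

theorem _root_.IsOpen.exists_cylinder_subset [TopologicalSpace Λ] {U : Set (ℕ → Λ)}
    (hU : IsOpen U) {x : ℕ → Λ} (hx : x ∈ U) : ∃ n, PiNat.cylinder x n ⊆ U := by
  obtain ⟨I, hI⟩ := hU.exists_finset_subset hx
  obtain ⟨n, hn⟩ := Finset.exists_nat_subset_range I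
  exact ⟨n, fun y hy => hI fun i hi => hy i (Finset.mem_range.1 (hn hi))⟩

section Approximation

theorem Pref.of_mem_cylinder {α : List Λ} {x y : ℕ → Λ} {n : ℕ} (hα : Pref α x)
    (hn : α.length ≤ n) (hy : y ∈ PiNat.cylinder x n) : Pref α y := fun i hi =>
  (hy i (by omega)).trans (hα i hi)

theorem continuous_cat_tail [TopologicalSpace Λ] (β : List Λ) (n : ℕ) :
    Continuous fun x : ℕ → Λ => cat β (tail x n) := by
  refine continuous_pi fun i => ?_
  rcases lt_or_ge i β.length with h | h
  · simp only [cat_apply_of_lt _ _ h]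
    exact continuous_const
  · simp only [cat_apply_of_le _ _ h, tail]
    exact continuous_apply _

variable [DecidableEq Λ] [TopologicalSpace Λ] {X : Set (ℕ → Λ)} {x : ℕ → Λ}
  (hX : IsSubshift X) (hx : x ∈ X)
include hX hx

theorem exists_cylinder_notMem_xiSet {h : FreeGroup Λ} (hh : h ∉ xiSet X x) :
    ∃ n, ∀ y ∈ PiNat.cylinder x n, y ∈ X → h ∉ xiSet X y := by
  by_cases hred : ∃ α β : List Λ, h = wd α * (wd β)⁻¹ ∧ FreeGroup.norm h = α.length + β.length
  · obtain ⟨α, β, rfl, hn⟩ := hred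
    suffices ∃ n, ∀ y ∈ PiNat.cylinder x n, ¬ (Pref α y ∧ cat β (tail y α.length) ∈ X) by
      obtain ⟨n, hn'⟩ := this
      refine ⟨n, fun y hy hyX hmem => hn' y hy ?_⟩
      obtain ⟨γ, δ, he, hn'', hγ, hδ⟩ := (mem_xiSet_iff hX hyX).1 hmem
      obtain ⟨rfl, rfl⟩ := eq_of_wd_mul_inv_eq he.symm (he ▸ hn'') hn
      exact ⟨hγ, hδ⟩
    by_cases hα : Pref α x
    · have hβ : x ∈ (fun y => cat β (tail y α.length)) ⁻¹' Xᶜ := fun hβ =>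
        hh ((mem_xiSet_iff hX hx).2 ⟨α, β, rfl, hn, hα, hβ⟩)
      obtain ⟨n, hn'⟩ :=
        (hX.2.1.isOpen_compl.preimage (continuous_cat_tail β α.length)).exists_cylinder_subset hβ
      exact ⟨n, fun y hy hαβ => hn' hy hαβ.2⟩
    · exact ⟨α.length, fun y hy hαβ =>
        hα (hαβ.1.of_mem_cylinder le_rfl ((PiNat.mem_cylinder_comm x y _).1 hy))⟩
  · refine ⟨0, fun y _ hyX hmem => hred ?_⟩
    obtain ⟨α, β, he, hn, -⟩ := (mem_xiSet_iff hX hyX).1 hmem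
    exact ⟨α, β, he, hn⟩

theorem exists_follower_words_xiSet_iff (h : FreeGroup Λ) : ∃ N, ∀ M ≥ N, ∃ Bs : List (List Λ),
    (∀ β ∈ Bs, tail x M ∈ follower X β) ∧ ∀ z, (∀ β ∈ Bs, z ∈ follower X β) →
      cat (prefixWord x M) z ∈ X → (h ∈ xiSet X (cat (prefixWord x M) z) ↔ h ∈ xiSet X x) := by
  by_cases hh : h ∈ xiSet X x
  · obtain ⟨α, β, rfl, hn, hα, hβ⟩ := (mem_xiSet_iff hX hx).1 hh
    refine ⟨α.length, fun M hM => ⟨[β ++ (prefixWord x M).drop α.length], ?_, ?_⟩⟩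
    · simp only [List.mem_singleton, forall_eq]
      refine ⟨hX.tail_mem hx M, ?_⟩
      have htail := cat_drop_tail_of_pref (pref_prefixWord x M) (m := α.length)
        (by simpa using hM)
      rw [length_prefixWord] at htail
      rwa [cat_append, htail]
    · intro z hz hzX
      simp only [List.mem_singleton, forall_eq] at hz
      refine iff_of_true ((mem_xiSet_iff hX hzX).2 ⟨α, β, rfl, hn,
        hα.of_mem_cylinder hM (mem_cylinder_cat_prefixWord x z M), ?_⟩) hh
      have htail := cat_drop_tail_of_pref (pref_cat (prefixWord x M) z) (m := α.length)
        (by simpa using hM)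
      rw [tail_cat] at htail
      rw [← htail, ← cat_append]
      exact hz.2
  · obtain ⟨n, hn⟩ := exists_cylinder_notMem_xiSet hX hx hh
    refine ⟨n, fun M hM => ⟨[], by simp, fun z _ hzX => iff_of_false ?_ hh⟩⟩
    exact hn _ (PiNat.cylinder_anti x hM (mem_cylinder_cat_prefixWord x z M)) hzX

theorem exists_follower_words_xiB_mem {U : Set (FreeGroup Λ → Bool)} (hU : IsOpen U)
    (hxU : xiB X x ∈ U) : ∃ N, ∀ M ≥ N, ∃ Bs : List (List Λ),
      (∀ β ∈ Bs, tail x M ∈ follower X β) ∧ ∀ z, (∀ β ∈ Bs, z ∈ follower X β) →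
        cat (prefixWord x M) z ∈ X ∧ xiB X (cat (prefixWord x M) z) ∈ U := by
  obtain ⟨G, hG⟩ := hU.exists_finset_subset hxU
  choose! N Bs hBs using exists_follower_words_xiSet_iff hX hx
  refine ⟨G.sup N, fun M hM => ⟨prefixWord x M :: G.toList.flatMap (Bs · M), ?_, ?_⟩⟩
  · simp only [List.mem_cons, List.mem_flatMap, Finset.mem_toList]
    rintro β (rfl | ⟨h, hh, hβ⟩)
    · refine ⟨hX.tail_mem hx M, ?_⟩
      rwa [cat_prefixWord_tail]
    · exact (hBs h M ((Finset.le_sup hh).trans hM)).1 β hβ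
  · intro z hz
    have hzX : cat (prefixWord x M) z ∈ X := (hz _ List.mem_cons_self).2
    refine ⟨hzX, hG fun h hh => ?_⟩
    rw [Bool.eq_iff_iff, xiB_eq_true, xiB_eq_true]
    refine (hBs h M ((Finset.le_sup hh).trans hM)).2 z (fun β hβ => hz β ?_) hzX
    exact List.mem_cons_of_mem _ (List.mem_flatMap.2 ⟨h, Finset.mem_toList.2 hh, hβ⟩)

end Approximation

def HasFollowerExits [Nonempty Λ] (X : Set (ℕ → Λ)) : Prop :=
  ∀ (Bs : List (List Λ)) (γ : List Λ), γ ≠ [] → perInf γ ∈ X →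
    (∀ β ∈ Bs, perInf γ ∈ follower X β) →
    ∃ z ∈ X, z ≠ perInf γ ∧ ∀ β ∈ Bs, z ∈ follower X β

section Main

variable [Nonempty Λ] [DecidableEq Λ] [TopologicalSpace Λ] {X : Set (ℕ → Λ)}

theorem hasFollowerExits_of_topFree (hX : IsSubshift X) (hfree : TopFree X) :
    HasFollowerExits X := by
  intro Bs γ hγ hper hfol
  by_contra! hlonely
  let U : Set (FreeGroup Λ → Bool) := {ξ | ∀ β ∈ Bs, ξ (wd β)⁻¹ = true}
  have hU : IsOpen U := by
    simp only [U, Set.ofPred_forall]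
    exact Bs.finite_toSet.isOpen_biInter fun β _ =>
      (isOpen_discrete {true}).preimage (continuous_apply (A := fun _ => Bool) _)
  have hperU : xiB X (perInf γ) ∈ U := fun β hβ =>
    xiB_eq_true.2 ((inv_wd_mem_xiSet_iff hX hper).2 (hfol β hβ).2)
  have hsub : U ∩ Omega X ⊆ {xiB X (perInf γ)} := by
    refine fun ξ hξ => closure_minimal ?_ isClosed_singleton (hU.inter_closure hξ)
    rintro _ ⟨hyU, y, hy, rfl⟩
    by_contra hne
    obtain ⟨β, hβ, hyβ⟩ := hlonely y hy (by rintro rfl; exact hne rfl)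
    exact hyβ ⟨hy, (inv_wd_mem_xiSet_iff hX hy).1 (xiB_eq_true.1 (hyU β hβ))⟩
  have hfix : xiB X (perInf γ) ∈ fixedSet (wd γ) :=
    (xiB_mem_fixedSet_iff hX hper (α := []) (β := γ) (by simp)
      (by simp [FreeGroup.norm_inv_eq, norm_wd])).2
      ⟨pref_nil _, pref_perInf γ, by simp [tail_perInf_length]⟩
  have hγ1 : wd γ ≠ 1 := fun h =>
    hγ (List.length_eq_zero_iff.1 (by rw [← norm_wd, h, FreeGroup.norm_one]))
  have hempty := hfree _ hγ1 U hU (hsub.trans (Set.singleton_subset_iff.2 hfix))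
  exact Set.eq_empty_iff_forall_notMem.1 hempty _ ⟨hperU, xiB_mem_Omega hper⟩

theorem topFree_of_hasFollowerExits (hX : IsSubshift X) (hexits : HasFollowerExits X) :
    TopFree X := by
  intro g hg U hU hfix
  by_contra hne
  obtain ⟨ξ, hξU, hξΩ⟩ := Set.nonempty_iff_ne_empty.2 hne
  obtain ⟨_, hxU, x, hx, rfl⟩ := mem_closure_iff.1 hξΩ U hU hξU
  obtain ⟨s, p, hp, hxper, hrigid⟩ :=
    exists_period_of_mem_fixedSet hX hx hg (hfix ⟨hxU, xiB_mem_Omega hx⟩)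
  obtain ⟨N, hN⟩ := exists_follower_words_xiB_mem hX hx hU hxU
  set M := max N (s + p)
  obtain ⟨Bs, hBs, hzU⟩ := hN M (le_max_left _ _)
  have hcircuit : perInf (prefixWord (tail x M) p) = tail x M :=
    perInf_prefixWord hp (tail_tail_of_tail_eq hxper (by omega))
  obtain ⟨z, -, hzne, hzBs⟩ := hexits Bs (prefixWord (tail x M) p)
    (List.ne_nil_of_length_pos (by simpa using hp)) (by rw [hcircuit]; exact hX.tail_mem hx M)
    (by rwa [hcircuit])
  obtain ⟨hx'X, hx'U⟩ := hzU z hzBs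
  have hx'x : cat (prefixWord x M) z = x :=
    eq_of_tail_eq_of_eqOn hp (hrigid _ hx'X (hfix ⟨hx'U, xiB_mem_Omega hx'X⟩)) hxper
      fun i hi => mem_cylinder_cat_prefixWord x z M i (by omega)
  have hz := tail_cat (prefixWord x M) z
  rw [hx'x, length_prefixWord] at hz
  exact hzne (hz.symm.trans hcircuit.symm)

end Main

theorem topFree_iff_general {Λ : Type} [Nonempty Λ] [DecidableEq Λ] [TopologicalSpace Λ]
    (X : Set (ℕ → Λ)) (hX : IsSubshift X) :
    TopFree X ↔
      ∀ (Bs : List (List Λ)) (γ : List Λ), γ ≠ [] → perInf γ ∈ X →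
        (∀ β ∈ Bs, perInf γ ∈ follower X β) →
        ∃ z ∈ X, z ≠ perInf γ ∧ ∀ β ∈ Bs, z ∈ follower X β :=
  ⟨hasFollowerExits_of_topFree hX, topFree_of_hasFollowerExits hX⟩

/-- the spectral partial action is topologically free iff for every finite
family of words `β₁,…,β_n` and every circuit `γ` with `γ^∞ ∈ ⋂ F_{β_i}`, the set
`⋂ F_{β_i}` contains an element other than `γ^∞`. -/
theorem topFree_iff {Λ : Type} [Fintype Λ] [Nonempty Λ] [DecidableEq Λ]
    [TopologicalSpace Λ] [DiscreteTopology Λ]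
    (X : Set (ℕ → Λ)) (hX : IsSubshift X) :
    TopFree X ↔
      ∀ (Bs : List (List Λ)) (γ : List Λ), γ ≠ [] → perInf γ ∈ X →
        (∀ β ∈ Bs, perInf γ ∈ follower X β) →
        ∃ z ∈ X, z ≠ perInf γ ∧ ∀ β ∈ Bs, z ∈ follower X β :=
  topFree_iff_general X hX

end SubshiftPaper
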